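/- arXiv:1710.04572 — 7 statements merged into one kernel-verified Lean document; each statement's English description precedes it below -/
import Mathlib

section
/- Let λ ∈ ℝ and α, β > 0. Then the system of equations 1 − λ + α√(ab) − β(a+b)/(2ab) = 0 and 1 + λ + β/√(ab) − α(a+b)/2 = 0 has a unique solution (a, b) with 0 < a < b and |λ|·((√a − √b)/(√a + √b))² < 1. -/
/-!
Writing t = √(ab), the two equations are linear in λ and in the arithmetic mean m = (a + b)/2;
solving them gives λ = fgigLambda α β t and m = fgigMean α β t. Since fgigLambda α β is a
strictly increasing bijection of (0, ∞) onto ℝ, the value of λ pins down t, hence a + b and ab,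
hence the ordered pair a < b. The side condition reduces to |λ| · (m - t)/(m + t) < 1, which
holds because |λ| < α t + β/t + 1 = (α t² + β + t)/t and (m - t)/(m + t) = t/(α t² + β + t).
-/

open Real Filter Topology Set

theorem abs_sub_div_add_le_one {K : Type*} [Field K] [LinearOrder K] [IsStrictOrderedRing K]
    {x y : K} (hx : 0 ≤ x) (hy : 0 ≤ y) : |(x - y) / (x + y)| ≤ 1 := by
  rw [abs_div, abs_of_nonneg (add_nonneg hx hy)]
  exact div_le_one_of_le₀ (abs_sub_le_iff.2 ⟨by linarith, by linarith⟩) (add_nonneg hx hy)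

theorem eq_and_eq_of_add_eq_of_mul_eq {K : Type*} [Field K] [LinearOrder K]
    [IsStrictOrderedRing K] {a b a' b' : K} (hab : a < b) (hab' : a' < b')
    (hs : a + b = a' + b') (hp : a * b = a' * b') : a = a' ∧ b = b' := by
  have hsq : (b - a) ^ 2 = (b' - a') ^ 2 := by
    linear_combination (a + b + a' + b') * hs - 4 * hp
  have hd : b - a = b' - a' := (sq_eq_sq₀ (sub_pos.2 hab).le (sub_pos.2 hab').le).1 hsq
  constructor <;> linarith

theorem exists_pos_lt_add_eq_mul_eq {m p : ℝ} (hm : 0 < m) (hp : 0 < p) (hpm : p < m ^ 2) :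
    ∃ a b, 0 < a ∧ a < b ∧ a + b = 2 * m ∧ a * b = p := by
  have hd : √(m ^ 2 - p) ^ 2 = m ^ 2 - p := sq_sqrt (by linarith)
  have hd0 : 0 < √(m ^ 2 - p) := sqrt_pos.2 (by linarith)
  have hdm : √(m ^ 2 - p) < m := (sqrt_lt' hm).2 (by linarith)
  exact ⟨m - √(m ^ 2 - p), m + √(m ^ 2 - p), by linarith, by linarith, by ring,
    by linear_combination -hd⟩

theorem sqrt_sub_div_sqrt_add_sq {a b : ℝ} (ha : 0 ≤ a) (hb : 0 ≤ b) :
    ((√a - √b) / (√a + √b)) ^ 2 = ((a + b) / 2 - √(a * b)) / ((a + b) / 2 + √(a * b)) := by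
  rw [div_pow, sub_sq, add_sq, sq_sqrt ha, sq_sqrt hb, sqrt_mul ha,
    ← mul_div_mul_left ((a + b) / 2 - _) _ (two_ne_zero' ℝ)]
  congr 1 <;> ring

theorem exists_eq_of_continuousOn_Ioi {f : ℝ → ℝ} {a : ℝ} (hf : ContinuousOn f (Ioi a))
    (hbot : Tendsto f (𝓝[>] a) atBot) (htop : Tendsto f atTop atTop) (y : ℝ) :
    ∃ x, a < x ∧ f x = y := by
  obtain ⟨x₁, hx₁y, hx₁⟩ := ((hbot.eventually_lt_atBot y).and self_mem_nhdsWithin).exists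
  obtain ⟨x₂, hx₂y, hx₁₂⟩ := ((htop.eventually_gt_atTop y).and (eventually_ge_atTop x₁)).exists
  obtain ⟨x, hx, rfl⟩ := intermediate_value_Icc hx₁₂
    (hf.mono fun x hx ↦ lt_of_lt_of_le hx₁ hx.1) ⟨hx₁y.le, hx₂y.le⟩
  exact ⟨x, lt_of_lt_of_le hx₁ hx.1, rfl⟩

noncomputable def fgigLambda (α β t : ℝ) : ℝ :=
  α * t - β / t + (α * t ^ 2 - β) / (α * t ^ 2 + β)

noncomputable def fgigMean (α β t : ℝ) : ℝ := t + 2 * t ^ 2 / (α * t ^ 2 + β)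

section

variable {α β : ℝ}

theorem fgig_system_iff {l a b t : ℝ} (ht : 0 < t) (hden : α * t ^ 2 + β ≠ 0)
    (habt : a * b = t ^ 2) :
    (1 - l + α * √(a * b) - β * (a + b) / (2 * a * b) = 0 ∧
        1 + l + β / √(a * b) - α * (a + b) / 2 = 0) ↔
      l = fgigLambda α β t ∧ a + b = 2 * fgigMean α β t := by
  rw [habt, sqrt_sq ht.le, mul_assoc, habt]
  constructor
  · rintro ⟨h1, h2⟩
    have hsum : a + b = 2 * fgigMean α β t := by
      unfold fgigMean
      field_simp at h1 h2 ⊢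
      linear_combination -h1 - t * h2
    refine ⟨?_, hsum⟩
    rw [show l = α * (a + b) / 2 - 1 - β / t by linarith, hsum]
    unfold fgigLambda fgigMean
    field_simp
    ring
  · rintro ⟨rfl, hs⟩
    rw [hs]
    unfold fgigLambda fgigMean
    constructor <;> field_simp <;> ring

theorem abs_fgigLambda_sub_le (hα : 0 ≤ α) (hβ : 0 ≤ β) (t : ℝ) :
    |fgigLambda α β t - (α * t - β / t)| ≤ 1 := by
  rw [fgigLambda, add_sub_cancel_left]
  exact abs_sub_div_add_le_one (by positivity) hβ

theorem fgigLambda_strictMonoOn (hα : 0 < α) (hβ : 0 < β) :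
    StrictMonoOn (fgigLambda α β) (Ioi 0) := by
  intro x (hx : 0 < x) y (hy : 0 < y) hxy
  have hdiff : fgigLambda α β y - fgigLambda α β x = (y - x) *
      (α + β / (x * y) + 2 * α * β * (x + y) / ((α * x ^ 2 + β) * (α * y ^ 2 + β))) := by
    unfold fgigLambda
    field_simp
    ring
  have := mul_pos (sub_pos.2 hxy) (by positivity :
    0 < α + β / (x * y) + 2 * α * β * (x + y) / ((α * x ^ 2 + β) * (α * y ^ 2 + β)))
  linarith

theorem continuousOn_fgigLambda (hα : 0 < α) (hβ : 0 < β) :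
    ContinuousOn (fgigLambda α β) (Ioi 0) := by
  unfold fgigLambda
  fun_prop (disch := intro x (hx : 0 < x); positivity)

theorem tendsto_fgigLambda_nhdsGT_zero (hα : 0 ≤ α) (hβ : 0 < β) :
    Tendsto (fgigLambda α β) (𝓝[>] 0) atBot := by
  have hlin : Tendsto (fun t ↦ α * t + 1) (𝓝[>] 0) (𝓝 (α * 0 + 1)) :=
    tendsto_nhdsWithin_of_tendsto_nhds (Continuous.tendsto (by fun_prop) 0)
  refine tendsto_atBot_mono (fun t ↦ ?_) (hlin.add_atBot
    (tendsto_neg_atTop_atBot.comp (tendsto_inv_nhdsGT_zero.const_mul_atTop hβ)))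
  have := (abs_le.1 (abs_fgigLambda_sub_le hα hβ.le t)).2
  simp only [Function.comp_apply, div_eq_mul_inv] at this ⊢
  linarith

theorem tendsto_fgigLambda_atTop (hα : 0 < α) (hβ : 0 ≤ β) :
    Tendsto (fgigLambda α β) atTop atTop := by
  have hrest : Tendsto (fun t : ℝ ↦ -(β * t⁻¹) - 1) atTop (𝓝 (-(β * 0) - 1)) :=
    ((tendsto_inv_atTop_zero.const_mul β).neg).sub_const 1
  refine tendsto_atTop_mono (fun t ↦ ?_) ((tendsto_id.const_mul_atTop hα).atTop_add hrest)
  have := (abs_le.1 (abs_fgigLambda_sub_le hα.le hβ t)).1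
  simp only [id, div_eq_mul_inv] at this ⊢
  linarith

theorem abs_fgigLambda_mul_lt_one {t : ℝ} (hα : 0 < α) (hβ : 0 < β) (ht : 0 < t) :
    |fgigLambda α β t| * ((fgigMean α β t - t) / (fgigMean α β t + t)) < 1 := by
  have hratio : (fgigMean α β t - t) / (fgigMean α β t + t) = t / (α * t ^ 2 + β + t) := by
    unfold fgigMean
    field_simp
    ring
  have hbound : |fgigLambda α β t| < (α * t ^ 2 + β + t) / t := by
    have := abs_le.1 (abs_fgigLambda_sub_le hα.le hβ.le t)
    have : 0 < α * t := by positivity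
    have : 0 < β / t := by positivity
    rw [show (α * t ^ 2 + β + t) / t = α * t + β / t + 1 by field_simp, abs_lt]
    constructor <;> linarith
  rw [hratio]
  calc |fgigLambda α β t| * (t / (α * t ^ 2 + β + t))
      < (α * t ^ 2 + β + t) / t * (t / (α * t ^ 2 + β + t)) :=
        mul_lt_mul_of_pos_right hbound (by positivity)
    _ = 1 := by field_simp

end

theorem fgig_support_exists_unique (l α β : ℝ) (hα : 0 < α) (hβ : 0 < β) :
    ∃! p : ℝ × ℝ,
      (0 < p.1 ∧ p.1 < p.2 ∧
        |l| * ((Real.sqrt p.1 - Real.sqrt p.2) / (Real.sqrt p.1 + Real.sqrt p.2))^2 < 1) ∧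
      1 - l + α * Real.sqrt (p.1 * p.2) - β * (p.1 + p.2) / (2 * p.1 * p.2) = 0 ∧
      1 + l + β / Real.sqrt (p.1 * p.2) - α * (p.1 + p.2) / 2 = 0 := by
  obtain ⟨t, ht, hlt⟩ := exists_eq_of_continuousOn_Ioi (continuousOn_fgigLambda hα hβ)
    (tendsto_fgigLambda_nhdsGT_zero hα.le hβ) (tendsto_fgigLambda_atTop hα hβ.le) l
  have htm : t < fgigMean α β t := lt_add_of_pos_right t (by positivity)
  obtain ⟨a, b, ha, hab, hsum, hprod⟩ := exists_pos_lt_add_eq_mul_eq (ht.trans htm)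
    (pow_pos ht 2) (pow_lt_pow_left₀ htm ht.le two_ne_zero)
  refine ⟨(a, b),
    ⟨⟨ha, hab, ?_⟩, (fgig_system_iff ht (by positivity) hprod).2 ⟨hlt.symm, hsum⟩⟩, ?_⟩
  · rw [sqrt_sub_div_sqrt_add_sq ha.le (ha.trans hab).le, hprod, sqrt_sq ht.le, hsum,
      mul_div_cancel_left₀ _ two_ne_zero, ← hlt]
    exact abs_fgigLambda_mul_lt_one hα hβ ht
  · rintro ⟨a', b'⟩ ⟨⟨ha', hab', -⟩, hsys⟩
    have ht' : 0 < √(a' * b') := sqrt_pos.2 (mul_pos ha' (ha'.trans hab'))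
    have hprod' : a' * b' = √(a' * b') ^ 2 := (sq_sqrt (mul_pos ha' (ha'.trans hab')).le).symm
    obtain ⟨hl', hsum'⟩ := (fgig_system_iff ht' (by positivity) hprod').1 hsys
    have htt' : √(a' * b') = t :=
      (fgigLambda_strictMonoOn hα hβ).injOn ht' ht (hl'.symm.trans hlt.symm)
    obtain ⟨rfl, rfl⟩ := eq_and_eq_of_add_eq_of_mul_eq hab' hab (by rw [hsum', hsum, htt'])
      (by rw [hprod', htt', hprod])
    rfl
end

section
/- Let 0 < a < b satisfy |λ|·((√a − √b)/(√a + √b))² < 1 for some λ ∈ ℝ. Then α := (2/(√a − √b)²)·(1 + λ((√a − √b)/(√a + √b))²) and β := (2ab/(√a − √b)²)·(1 − λ((√a − √b)/(√a + √b))²) are both strictly positive, and (α, β) is the unique pair of positive reals satisfying 1 − λ + α√(ab) − β(a+b)/(2ab) = 0 and 1 + λ + β/√(ab) − α(a+b)/2 = 0. -/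
/-!
Writing `a = s ^ 2` and `b = t ^ 2`, the two moment equations are linear in `(α, β)` with
determinant `-(t ^ 2 - s ^ 2) ^ 2 / (4 s ^ 2 t ^ 2)`, which is nonzero because `a ≠ b`; so they
have exactly one solution, and a direct computation shows it is the stated pair. Its positivity
is the condition `|λ| ((s - t) / (s + t)) ^ 2 < 1`.
-/

open Real

theorem eq_and_eq_of_linear_system {K : Type*} [Field K] {p q r u x y x' y' : K}
    (hdet : p * u - q * r ≠ 0) (h₁ : p * x + q * y = p * x' + q * y')
    (h₂ : r * x + u * y = r * x' + u * y') : x = x' ∧ y = y' := by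
  have hx : (p * u - q * r) * (x - x') = 0 := by linear_combination u * h₁ - q * h₂
  have hy : (p * u - q * r) * (y - y') = 0 := by linear_combination p * h₂ - r * h₁
  exact ⟨sub_eq_zero.1 ((mul_eq_zero.1 hx).resolve_left hdet),
    sub_eq_zero.1 ((mul_eq_zero.1 hy).resolve_left hdet)⟩

namespace FreeGIG

/-- Here and below `s` and `t` stand for `√a` and `√b`, where `[a, b]` is the support. -/
noncomputable def alpha (l s t : ℝ) : ℝ := 2 / (s - t) ^ 2 * (1 + l * ((s - t) / (s + t)) ^ 2)

noncomputable def beta (l s t : ℝ) : ℝ :=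
  2 * s ^ 2 * t ^ 2 / (s - t) ^ 2 * (1 - l * ((s - t) / (s + t)) ^ 2)

def IsSolution (l s t α β : ℝ) : Prop :=
  1 - l + α * (s * t) - β * (s ^ 2 + t ^ 2) / (2 * s ^ 2 * t ^ 2) = 0 ∧
    1 + l + β / (s * t) - α * (s ^ 2 + t ^ 2) / 2 = 0

variable {l s t : ℝ}

theorem abs_mul_lt_one (hl : |l| * ((s - t) / (s + t)) ^ 2 < 1) :
    |l * ((s - t) / (s + t)) ^ 2| < 1 := by
  rwa [abs_mul, abs_sq]

theorem alpha_pos (hst : s ≠ t) (hl : |l| * ((s - t) / (s + t)) ^ 2 < 1) : 0 < alpha l s t :=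
  mul_pos (div_pos two_pos (sq_pos_iff.2 (sub_ne_zero.2 hst)))
    (by linarith [(abs_lt.1 (abs_mul_lt_one hl)).1])

theorem beta_pos (hs : s ≠ 0) (ht : t ≠ 0) (hst : s ≠ t)
    (hl : |l| * ((s - t) / (s + t)) ^ 2 < 1) : 0 < beta l s t :=
  mul_pos (div_pos (by positivity) (sq_pos_iff.2 (sub_ne_zero.2 hst)))
    (by linarith [(abs_lt.1 (abs_mul_lt_one hl)).2])

theorem isSolution_alpha_beta (hs : s ≠ 0) (ht : t ≠ 0) (hst : s ^ 2 ≠ t ^ 2) :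
    IsSolution l s t (alpha l s t) (beta l s t) := by
  have hst' : (s + t) * (s - t) ≠ 0 := by rwa [← sq_sub_sq, sub_ne_zero]
  have hadd : s + t ≠ 0 := left_ne_zero_of_mul hst'
  have hsub : s - t ≠ 0 := right_ne_zero_of_mul hst'
  constructor <;>
  · simp only [alpha, beta]
    field_simp
    ring

theorem IsSolution.unique {α β α' β' : ℝ} (hs : s ≠ 0) (ht : t ≠ 0) (hst : s ^ 2 ≠ t ^ 2)
    (h : IsSolution l s t α β) (h' : IsSolution l s t α' β') : α = α' ∧ β = β' := by
  have hdet :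
      s * t * (1 / (s * t)) - -(s ^ 2 + t ^ 2) / (2 * s ^ 2 * t ^ 2) * (-(s ^ 2 + t ^ 2) / 2) =
        -(s ^ 2 - t ^ 2) ^ 2 / (4 * s ^ 2 * t ^ 2) := by
    field_simp
    ring
  refine eq_and_eq_of_linear_system (p := s * t) (q := -(s ^ 2 + t ^ 2) / (2 * s ^ 2 * t ^ 2))
    (r := -(s ^ 2 + t ^ 2) / 2) (u := 1 / (s * t)) ?_ (by linear_combination h.1 - h'.1)
    (by linear_combination h.2 - h'.2)
  rw [hdet]
  exact div_ne_zero (neg_ne_zero.2 (pow_ne_zero 2 (sub_ne_zero.2 hst))) (by positivity)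

end FreeGIG

open FreeGIG

theorem fgig_params_from_support (l a b : ℝ) (ha : 0 < a) (hab : a < b)
    (hl : |l| * ((Real.sqrt a - Real.sqrt b) / (Real.sqrt a + Real.sqrt b))^2 < 1)
    (α β : ℝ)
    (hαdef : α = 2 / (Real.sqrt a - Real.sqrt b)^2 *
      (1 + l * ((Real.sqrt a - Real.sqrt b) / (Real.sqrt a + Real.sqrt b))^2))
    (hβdef : β = 2 * a * b / (Real.sqrt a - Real.sqrt b)^2 *
      (1 - l * ((Real.sqrt a - Real.sqrt b) / (Real.sqrt a + Real.sqrt b))^2)) :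
    0 < α ∧ 0 < β ∧
    (1 - l + α * Real.sqrt (a * b) - β * (a + b) / (2 * a * b) = 0 ∧
      1 + l + β / Real.sqrt (a * b) - α * (a + b) / 2 = 0) ∧
    ∀ α' β' : ℝ, 0 < α' → 0 < β' →
      1 - l + α' * Real.sqrt (a * b) - β' * (a + b) / (2 * a * b) = 0 →
      1 + l + β' / Real.sqrt (a * b) - α' * (a + b) / 2 = 0 →
      α' = α ∧ β' = β := by
  have hb := ha.trans hab
  obtain ⟨s, hs, rfl⟩ : ∃ s, 0 < s ∧ a = s ^ 2 := ⟨√a, sqrt_pos.2 ha, (sq_sqrt ha.le).symm⟩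
  obtain ⟨t, ht, rfl⟩ : ∃ t, 0 < t ∧ b = t ^ 2 := ⟨√b, sqrt_pos.2 hb, (sq_sqrt hb.le).symm⟩
  have hsqrt : √(s ^ 2 * t ^ 2) = s * t := by rw [← mul_pow, sqrt_sq (mul_pos hs ht).le]
  simp only [sqrt_sq hs.le, sqrt_sq ht.le] at hl hαdef hβdef
  rw [hsqrt]
  have hst : s ≠ t := by rintro rfl; exact hab.ne rfl
  subst hαdef hβdef
  have hsol := isSolution_alpha_beta (l := l) hs.ne' ht.ne' hab.ne
  exact ⟨alpha_pos hst hl, beta_pos hs.ne' ht.ne' hst hl, hsol,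
    fun α' β' _ _ h₁ h₂ => IsSolution.unique hs.ne' ht.ne' hab.ne ⟨h₁, h₂⟩ hsol⟩
end

section
/- Suppose 0 < a < b, λ ∈ ℝ, and α, β > 0 satisfy 1 − λ + α√(ab) − β(a+b)/(2ab) = 0 and 1 + λ + β/√(ab) − α(a+b)/2 = 0. Then the pair (a', b') := (β/(αb), β/(αa)) satisfies the same system of equations with λ replaced by −λ, i.e. 1 + λ + α√(a'b') − β(a'+b')/(2a'b') = 0 and 1 − λ + β/√(a'b') − α(a'+b')/2 = 0. -/
/-!
Write `c = β / α`. The map `(a, b) ↦ (c / b, c / a)` sends `√(ab)` to `c / √(ab)`, hence exchanges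
`α √(ab)` with `β / √(ab)` and `β (a + b) / (2ab)` with `α (a + b) / 2`. It therefore swaps the
two equations of the system, and the swap is exactly the replacement of `λ` by `-λ`.
-/

open Real

section Field

variable {K : Type*} [Field K] {a b α β : K}

lemma mul_add_dual_div_two (ha : a ≠ 0) (hb : b ≠ 0) (hα : α ≠ 0) :
    α * (β / (α * b) + β / (α * a)) / 2 = β * (a + b) / (2 * a * b) := by
  field_simp

lemma mul_add_dual_div_two_mul_dual (ha : a ≠ 0) (hb : b ≠ 0) (hα : α ≠ 0) (hβ : β ≠ 0) :
    β * (β / (α * b) + β / (α * a)) / (2 * (β / (α * b)) * (β / (α * a))) = α * (a + b) / 2 := by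
  field_simp

end Field

section Real

variable {a b α β : ℝ}

lemma sqrt_dual_mul_dual (hα : 0 ≤ α) (hβ : 0 ≤ β) :
    √(β / (α * b) * (β / (α * a))) = β / α / √(a * b) := by
  have hc : 0 ≤ β / α := div_nonneg hβ hα
  rw [div_mul_eq_div_div, div_mul_eq_div_div, div_mul_div_comm, ← sq, mul_comm b,
    sqrt_div (sq_nonneg _), sqrt_sq hc]

lemma mul_sqrt_dual_mul_dual (hα : 0 < α) (hβ : 0 ≤ β) :
    α * √(β / (α * b) * (β / (α * a))) = β / √(a * b) := by
  rw [sqrt_dual_mul_dual hα.le hβ, ← mul_div_assoc, mul_div_cancel₀ β hα.ne']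

lemma div_sqrt_dual_mul_dual (ha : 0 < a) (hb : 0 < b) (hα : 0 < α) (hβ : 0 < β) :
    β / √(β / (α * b) * (β / (α * a))) = α * √(a * b) := by
  have hs : √(a * b) ≠ 0 := (sqrt_pos.mpr (mul_pos ha hb)).ne'
  rw [sqrt_dual_mul_dual hα.le hβ.le]
  field_simp

end Real

theorem fgig_support_sign_flip (l a b α β : ℝ) (ha : 0 < a) (hab : a < b)
    (hα : 0 < α) (hβ : 0 < β)
    (h1 : 1 - l + α * Real.sqrt (a * b) - β * (a + b) / (2 * a * b) = 0)
    (h2 : 1 + l + β / Real.sqrt (a * b) - α * (a + b) / 2 = 0) :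
    1 + l + α * Real.sqrt (β / (α * b) * (β / (α * a))) -
      β * (β / (α * b) + β / (α * a)) / (2 * (β / (α * b)) * (β / (α * a))) = 0 ∧
    1 - l + β / Real.sqrt (β / (α * b) * (β / (α * a))) -
      α * (β / (α * b) + β / (α * a)) / 2 = 0 := by
  have hb : 0 < b := ha.trans hab
  rw [mul_sqrt_dual_mul_dual hα hβ.le, div_sqrt_dual_mul_dual ha hb hα hβ,
    mul_add_dual_div_two_mul_dual ha.ne' hb.ne' hα.ne' hβ.ne',
    mul_add_dual_div_two ha.ne' hb.ne' hα.ne']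
  exact ⟨h2, h1⟩
end

section
/- Let 0 < max{1, |λ|}·A < B, and define α, β, δ, η as in the factorized parametrization of the free GIG distribution. Then δ ≥ −√(α/(4β)), with equality if and only if λ = 0. -/
/-! The ratio `α / (4β)` exceeds `δ²` by `δ² (λA)² / ((B - λA)(B + λA))`, which is nonnegative and
vanishes exactly when `λ = 0`; since `δ < 0`, this gives `-√(α / (4β)) ≤ δ` with the same
equality case. -/

theorem Real.eq_neg_sqrt_sq_add_iff {x g : ℝ} (hx : x ≤ 0) (hg : 0 ≤ g) :
    x = -√(x ^ 2 + g) ↔ g = 0 := by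
  rw [eq_comm, neg_eq_iff_eq_neg, sqrt_eq_iff_eq_sq (by positivity) (neg_nonneg.mpr hx),
    neg_sq, add_eq_left]

namespace FGIG

theorem pos_and_lt_of_max_mul_lt {l A B : ℝ} (h1 : 0 < max 1 |l| * A)
    (h2 : max 1 |l| * A < B) : 0 < A ∧ A < B ∧ |l * A| < B := by
  have hA : 0 < A := pos_of_mul_pos_right h1 (by positivity)
  refine ⟨hA, ?_, ?_⟩
  · nlinarith [le_max_left 1 |l|]
  · rw [abs_mul, abs_of_pos hA]
    nlinarith [le_max_right 1 |l|]

theorem delta_neg {l A B : ℝ} (hA : 0 < A) (hAB : A < B) (hlA : |l * A| < B) :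
    -(2 * (B + l * A)) / (B * (B - A)) < 0 := by
  have : 0 < B + l * A := by linarith [neg_abs_le (l * A)]
  exact div_neg_of_neg_of_pos (by linarith) (mul_pos (by linarith) (by linarith))

theorem alpha_div_four_beta_eq {l A B : ℝ} (hA : 0 < A) (hAB : A < B) (hlA : |l * A| < B) :
    2 / A * (1 + l * A / B) / (4 * ((B - A) ^ 2 / (8 * A) * (1 - l * A / B))) =
      (-(2 * (B + l * A)) / (B * (B - A))) ^ 2 +
        (-(2 * (B + l * A)) / (B * (B - A))) ^ 2 * (l * A) ^ 2 / ((B - l * A) * (B + l * A)) := by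
  obtain ⟨hgt, hlt⟩ := abs_lt.mp hlA
  have hB : B ≠ 0 := by linarith
  have hBA : B - A ≠ 0 := by linarith
  have hBlA : B - A * l ≠ 0 := by linarith
  have hBlA' : B + A * l ≠ 0 := by linarith
  field_simp
  ring

theorem gap_eq_zero_iff {l A B δ : ℝ} (hA : A ≠ 0) (hlA : |l * A| < B) (hδ : δ ≠ 0) :
    δ ^ 2 * (l * A) ^ 2 / ((B - l * A) * (B + l * A)) = 0 ↔ l = 0 := by
  have hden : (B - l * A) * (B + l * A) ≠ 0 := by
    have := abs_lt.mp hlA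
    exact mul_ne_zero (by linarith) (by linarith)
  simp [hden, hδ, hA]

theorem gap_nonneg {l A B δ : ℝ} (hlA : |l * A| < B) :
    0 ≤ δ ^ 2 * (l * A) ^ 2 / ((B - l * A) * (B + l * A)) := by
  have := abs_lt.mp hlA
  have hden : 0 < (B - l * A) * (B + l * A) := mul_pos (by linarith) (by linarith)
  positivity

end FGIG

theorem fgig_delta_lower_bound_general (l A B α β δ : ℝ)
    (h1 : 0 < max 1 |l| * A) (h2 : max 1 |l| * A < B)
    (hα : α = 2 / A * (1 + l * A / B))
    (hβ : β = (B - A)^2 / (8 * A) * (1 - l * A / B))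
    (hδ : δ = -(2 * (B + l * A)) / (B * (B - A))) :
    -Real.sqrt (α / (4 * β)) ≤ δ ∧ (δ = -Real.sqrt (α / (4 * β)) ↔ l = 0) := by
  obtain ⟨hA, hAB, hlA⟩ := FGIG.pos_and_lt_of_max_mul_lt h1 h2
  have hδneg : δ < 0 := hδ ▸ FGIG.delta_neg hA hAB hlA
  have hgap := FGIG.gap_nonneg (δ := δ) hlA
  rw [hα, hβ, FGIG.alpha_div_four_beta_eq hA hAB hlA, ← hδ]
  exact ⟨Real.neg_sqrt_le_of_sq_le (le_add_of_nonneg_right hgap),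
    (Real.eq_neg_sqrt_sq_add_iff hδneg.le hgap).trans (FGIG.gap_eq_zero_iff hA.ne' hlA hδneg.ne)⟩

theorem fgig_delta_lower_bound (l A B α β δ η : ℝ)
    (h1 : 0 < max 1 |l| * A) (h2 : max 1 |l| * A < B)
    (hα : α = 2 / A * (1 + l * A / B))
    (hβ : β = (B - A)^2 / (8 * A) * (1 - l * A / B))
    (hδ : δ = -(2 * (B + l * A)) / (B * (B - A)))
    (hη : η = 2 * B / (A * (B - l * A))) :
    -Real.sqrt (α / (4 * β)) ≤ δ ∧ (δ = -Real.sqrt (α / (4 * β)) ↔ l = 0) :=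
  fgig_delta_lower_bound_general l A B α β δ h1 h2 hα hβ hδ
end

section
/- Let A, B > 0 with max{1, |λ|}·A < B and λ < 0. Then 8λ²A³ − 9λ²A²B + B³ ≤ 0 if and only if λ ≤ −B^{3/2}/(A√(9B − 8A)). -/
open Real

lemma le_neg_div_iff_sq_le {x s c : ℝ} (hx : x ≤ 0) (hs : 0 ≤ s) (hc : 0 < c) :
    x ≤ -s / c ↔ s ^ 2 ≤ (x * c) ^ 2 := by
  have hxc : 0 ≤ -(x * c) := neg_nonneg.mpr (mul_nonpos_of_nonpos_of_nonneg hx hc.le)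
  rw [le_div_iff₀ hc, le_neg, ← pow_le_pow_iff_left₀ hs hxc two_ne_zero, neg_sq]

lemma rpow_three_halves_sq {B : ℝ} (hB : 0 ≤ B) : (B ^ ((3 : ℝ) / 2)) ^ 2 = B ^ 3 := by
  rw [rpow_div_two_eq_sqrt 3 hB, rpow_ofNat, ← pow_mul, mul_comm, pow_mul, sq_sqrt hB]

theorem fgig_fsd_criterion (l A B : ℝ)
    (h1 : 0 < max 1 |l| * A) (h2 : max 1 |l| * A < B) (hl : l < 0) :
    8 * l^2 * A^3 - 9 * l^2 * A^2 * B + B^3 ≤ 0 ↔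
      l ≤ -(B ^ ((3:ℝ)/2)) / (A * Real.sqrt (9 * B - 8 * A)) := by
  have hm : (1 : ℝ) ≤ max 1 |l| := le_max_left _ _
  have hA : 0 < A := pos_of_mul_pos_right h1 (zero_le_one.trans hm)
  have hAB : A < B := lt_of_le_of_lt (le_mul_of_one_le_left hA.le hm) h2
  have hB : 0 < B := hA.trans hAB
  have h9 : 0 < 9 * B - 8 * A := by linarith
  rw [le_neg_div_iff_sq_le hl.le (by positivity) (by positivity), rpow_three_halves_sq hB.le,
    mul_pow, mul_pow, sq_sqrt h9.le]
  constructor <;> intro h <;> linarith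
end

section
/- Let α, λ > 0. The quartic polynomial q(c) = αc⁴ − (1+λ)c³ + (1−λ)c − α has exactly one root in the interval (−1, 0), and no other root in (−∞, 0). -/
/-!
Writing `q(c) = α c⁴ - (1 + λ) c³ + (1 - λ) c - α` as
`(c² - 1)(α (c² + 1) - c) - λ c (c² + 1)` and dividing by `c (c² + 1)`, the equation `q(c) = 0`
becomes `quarticQuot α c = λ` on the negative half-line. Both `c - 1/c` and `2 / (c² + 1)` increase
on `(-∞, 0)`, so `quarticQuot α` is strictly increasing there, which gives uniqueness; and since
`quarticQuot α (-1) = 0 < λ`, every negative root lies to the right of `-1`.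
Existence follows from the intermediate value theorem, as `q(-1) = 2λ > 0 > -α = q(0)`.
-/

open Set

section Monotonicity

variable {K : Type*} [Field K] [LinearOrder K] [IsStrictOrderedRing K]

theorem strictMonoOn_sub_inv_Iio : StrictMonoOn (fun x : K => x - x⁻¹) (Iio 0) := by
  intro a ha b hb hab
  have : b⁻¹ < a⁻¹ := (inv_lt_inv_of_neg hb ha).2 hab
  show a - a⁻¹ < b - b⁻¹
  linarith

theorem strictMonoOn_inv_sq_add_one_Iio : StrictMonoOn (fun x : K => (x ^ 2 + 1)⁻¹) (Iio 0) := by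
  intro a ha b hb hab
  have hsq : b ^ 2 < a ^ 2 := by nlinarith [mem_Iio.1 hb]
  exact inv_strictAnti₀ (by positivity) (by linarith)

end Monotonicity

noncomputable def quarticQuot (α c : ℝ) : ℝ := α * (c - c⁻¹) + 2 * (c ^ 2 + 1)⁻¹ - 1

theorem quarticQuot_neg_one (α : ℝ) : quarticQuot α (-1) = 0 := by
  norm_num [quarticQuot]

theorem strictMonoOn_quarticQuot {α : ℝ} (hα : 0 ≤ α) : StrictMonoOn (quarticQuot α) (Iio 0) := by
  intro a ha b hb hab
  have h₁ : a - a⁻¹ ≤ b - b⁻¹ := (strictMonoOn_sub_inv_Iio ha hb hab).le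
  have h₂ : (a ^ 2 + 1)⁻¹ < (b ^ 2 + 1)⁻¹ := strictMonoOn_inv_sq_add_one_Iio ha hb hab
  unfold quarticQuot
  linarith [mul_le_mul_of_nonneg_left h₁ hα]

theorem quartic_eq_mul_quarticQuot (α l : ℝ) {c : ℝ} (hc : c ≠ 0) :
    α * c ^ 4 - (1 + l) * c ^ 3 + (1 - l) * c - α = c * (c ^ 2 + 1) * (quarticQuot α c - l) := by
  unfold quarticQuot
  field_simp
  ring

theorem quartic_eq_zero_iff {α l c : ℝ} (hc : c ≠ 0) :
    α * c ^ 4 - (1 + l) * c ^ 3 + (1 - l) * c - α = 0 ↔ quarticQuot α c = l := by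
  rw [quartic_eq_mul_quarticQuot α l hc, mul_eq_zero, sub_eq_zero, or_iff_right]
  positivity

theorem exists_quartic_root_mem_Ioo {α l : ℝ} (hα : 0 < α) (hl : 0 < l) :
    ∃ c ∈ Ioo (-1 : ℝ) 0, α * c ^ 4 - (1 + l) * c ^ 3 + (1 - l) * c - α = 0 := by
  have hcont : ContinuousOn (fun c : ℝ => α * c ^ 4 - (1 + l) * c ^ 3 + (1 - l) * c - α)
      (Icc (-1) 0) := by fun_prop
  exact intermediate_value_Ioo' (by norm_num) hcont ⟨by norm_num [hα], by norm_num; linarith⟩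

theorem fgig_quartic_root (α l : ℝ) (hα : 0 < α) (hl : 0 < l) :
    (∃! c : ℝ, c ∈ Set.Ioo (-1 : ℝ) 0 ∧
      α * c^4 - (1 + l) * c^3 + (1 - l) * c - α = 0) ∧
    (∀ c : ℝ, c < 0 → α * c^4 - (1 + l) * c^3 + (1 - l) * c - α = 0 →
      c ∈ Set.Ioo (-1 : ℝ) 0) := by
  have hmono := strictMonoOn_quarticQuot hα.le
  obtain ⟨c, hc, hqc⟩ := exists_quartic_root_mem_Ioo hα hl
  refine ⟨⟨c, ⟨hc, hqc⟩, fun d ⟨hd, hqd⟩ => hmono.injOn hd.2 hc.2 ?_⟩, fun d hd hqd => ⟨?_, hd⟩⟩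
  · rw [(quartic_eq_zero_iff hd.2.ne).1 hqd, (quartic_eq_zero_iff hc.2.ne).1 hqc]
  · rw [← hmono.lt_iff_lt (by norm_num) hd, quarticQuot_neg_one, (quartic_eq_zero_iff hd.ne).1 hqd]
    exact hl
end

section
/- Let c ∈ (−1, 0), α > 0, and suppose α₁ satisfies 1/(1+c²)² ≤ α₁ ≤ 1/(1+c²). Define β₁ = (1 − c²)/(α₁c²(1+c²)) − 1/c². Then −1 ≤ β₁ ≤ −c². Moreover, for every integer n ≥ 2, with p = (1 − c⁴)/(c(α − c + αc²)), one has 1 + c²β₁ⁿ + c²pα₁ ≥ α(1 − c⁴)/(α − c + αc²) > 0. -/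
/-! Put `s = c²` and `t = α₁(1 + s) ∈ [1/(1 + s), 1]`. Then `β₁ = (1 - s - t)/(s t)`, and the bounds
`-1 ≤ β₁ ≤ -s` amount to `(1 - s)(1 - t) ≥ 0` and `(1 - s)(t(1 + s) - 1) ≥ 0`. Hence `|β₁| ≤ 1` and
`β₁ⁿ ≥ -1` for every `n`, whatever its parity. Multiplying the remaining inequality by
`α - c + αc² > 0` and using `c²(1 + β₁ⁿ) ≥ 0`, what is left is `(1 - s)(-c)(1 - t) ≥ 0`. -/

/-- `β₁` of the free GIG recursion, written with `s = c²` and `a = α₁`. -/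
noncomputable def fgigBeta (s a : ℝ) : ℝ := (1 - s) / (a * s * (1 + s)) - 1 / s

section FgigBeta

variable {s a : ℝ}

theorem fgigBeta_eq (hs : 0 < s) (ha : 0 < a) :
    fgigBeta s a = (1 - s - a * (1 + s)) / (a * s * (1 + s)) := by
  unfold fgigBeta
  field_simp

theorem neg_one_le_fgigBeta (hs : 0 < s) (hs₁ : s ≤ 1) (ha : 0 < a) (ha₁ : a * (1 + s) ≤ 1) :
    -1 ≤ fgigBeta s a := by
  rw [fgigBeta_eq hs ha, le_div_iff₀ (by positivity)]
  nlinarith [mul_nonneg (sub_nonneg.2 hs₁) (sub_nonneg.2 ha₁)]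

theorem fgigBeta_le_neg (hs : 0 < s) (hs₁ : s ≤ 1) (ha₁ : 1 ≤ a * (1 + s) ^ 2) :
    fgigBeta s a ≤ -s := by
  have ha : 0 < a := by nlinarith
  rw [fgigBeta_eq hs ha, div_le_iff₀ (by positivity)]
  nlinarith [mul_nonneg (sub_nonneg.2 hs₁) (sub_nonneg.2 ha₁)]

end FgigBeta

theorem neg_one_le_pow_of_abs_le_one {x : ℝ} (hx : |x| ≤ 1) (n : ℕ) : -1 ≤ x ^ n :=
  (abs_le.1 (by rw [abs_pow]; exact pow_le_one₀ (abs_nonneg x) hx)).1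

theorem fgig_denominator_pos {α c : ℝ} (hα : 0 < α) (hc : c < 0) : 0 < α - c + α * c ^ 2 := by
  nlinarith [mul_nonneg hα.le (sq_nonneg c)]

theorem fgig_ratio_le_of_neg_one_le {α c a b : ℝ} (hα : 0 < α) (hc : c < 0) (hc₁ : c ^ 2 ≤ 1)
    (ha₁ : a * (1 + c ^ 2) ≤ 1) (hb : -1 ≤ b) :
    α * (1 - c ^ 4) / (α - c + α * c ^ 2) ≤
      1 + c ^ 2 * b + c ^ 2 * ((1 - c ^ 4) / (c * (α - c + α * c ^ 2))) * a := by
  have hD := fgig_denominator_pos hα hc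
  have hcleared : 0 ≤ (1 + c ^ 2 * b) * (α - c + α * c ^ 2) + (1 - c ^ 4) * (c * a - α) := by
    have hb' : 0 ≤ c ^ 2 * (1 + b) * (α - c + α * c ^ 2) :=
      mul_nonneg (mul_nonneg (sq_nonneg c) (by linarith)) hD.le
    have hfactor : 0 ≤ (1 - c ^ 2) * -c * (1 - a * (1 + c ^ 2)) :=
      mul_nonneg (mul_nonneg (by linarith) (by linarith)) (by linarith)
    linarith
  have hdiff : 1 + c ^ 2 * b + c ^ 2 * ((1 - c ^ 4) / (c * (α - c + α * c ^ 2))) * a -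
      α * (1 - c ^ 4) / (α - c + α * c ^ 2) =
      ((1 + c ^ 2 * b) * (α - c + α * c ^ 2) + (1 - c ^ 4) * (c * a - α)) /
        (α - c + α * c ^ 2) := by
    have hD₀ := hD.ne'
    have hc₀ := hc.ne
    generalize α - c + α * c ^ 2 = D at hD₀ ⊢
    field_simp
    ring
  rw [← sub_nonneg, hdiff]
  exact div_nonneg hcleared hD.le

theorem fgig_induction_bounds (α c α₁ β₁ p : ℝ) (hα : 0 < α)
    (hc : c ∈ Set.Ioo (-1 : ℝ) 0)
    (hα₁ : 1 / (1 + c^2)^2 ≤ α₁ ∧ α₁ ≤ 1 / (1 + c^2))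
    (hβ₁ : β₁ = (1 - c^2) / (α₁ * c^2 * (1 + c^2)) - 1 / c^2)
    (hp : p = (1 - c^4) / (c * (α - c + α * c^2))) :
    (-1 ≤ β₁ ∧ β₁ ≤ -c^2) ∧
    ∀ n : ℕ, 2 ≤ n →
      α * (1 - c^4) / (α - c + α * c^2) ≤ 1 + c^2 * β₁^n + c^2 * p * α₁ ∧
      0 < α * (1 - c^4) / (α - c + α * c^2) := by
  obtain ⟨hc₀, hc₁⟩ := hc
  have hs : 0 < c ^ 2 := sq_pos_of_neg hc₁
  have hs₁ : c ^ 2 < 1 := by nlinarith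
  have ha₀ : 1 ≤ α₁ * (1 + c ^ 2) ^ 2 := (div_le_iff₀ (by positivity)).1 hα₁.1
  have ha₁ : α₁ * (1 + c ^ 2) ≤ 1 := (le_div_iff₀ (by positivity)).1 hα₁.2
  have hβ₁_ge : -1 ≤ β₁ := hβ₁ ▸ neg_one_le_fgigBeta hs hs₁.le (by nlinarith) ha₁
  have hβ₁_le : β₁ ≤ -c ^ 2 := hβ₁ ▸ fgigBeta_le_neg hs hs₁.le ha₀
  refine ⟨⟨hβ₁_ge, hβ₁_le⟩, fun n _ => ⟨?_, ?_⟩⟩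
  · have hβ₁_abs : |β₁| ≤ 1 := abs_le.2 ⟨hβ₁_ge, by linarith⟩
    exact hp ▸ fgig_ratio_le_of_neg_one_le hα hc₁ hs₁.le ha₁ (neg_one_le_pow_of_abs_le_one hβ₁_abs n)
  · have : 0 < 1 - c ^ 4 := by nlinarith
    exact div_pos (mul_pos hα this) (fgig_denominator_pos hα hc₁)
end
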